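/- For every z ∈ ℂ and all x, y ∈ ℝ one has the Bargmann parity identities: ψ_z(x) · conj(ψ_z(−y)) = exp(−|z|²/ℏ) · Φ_{z, −conj(z)}(x,y) and ψ_z(−x) · conj(ψ_z(y)) = exp(−|z|²/ℏ) · Φ_{−z, conj(z)}(x,y). In words: reflecting one argument of a coherent projector kernel produces the Gaussian factor e^{−z·conj(z)/ℏ} times the analytic continuation of the coherent projector in which only one of the two conjugate variables is replaced by its negative. -/
import Mathlib

open MeasureTheory Complex

/-- One-dimensional coherent state `ψ_z`, `z = q + ip`. -/
noncomputable def cs (ℏ : ℝ) (z : ℂ) (x : ℝ) : ℂ :=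
  (((Real.pi * ℏ) ^ (-(1 : ℝ) / 4) : ℝ) : ℂ) *
    Complex.exp (-(((x - z.re : ℝ) : ℂ)) ^ 2 / (2 * (ℏ : ℂ))) *
    Complex.exp (Complex.I * (z.im : ℂ) * (x : ℂ) / (ℏ : ℂ))

/-- Analytically continued coherent projector kernel `Φ_{a,b}(x,y)`. -/
noncomputable def Phi (ℏ : ℝ) (a b : ℂ) (x y : ℝ) : ℂ :=
  (((Real.pi * ℏ) ^ (-(1 : ℝ) / 2) : ℝ) : ℂ) *
    Complex.exp (-((x ^ 2 + y ^ 2 : ℝ) : ℂ) / (2 * (ℏ : ℂ))) *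
    Complex.exp ((a * (x : ℂ) + b * (y : ℂ)) / (ℏ : ℂ)) *
    Complex.exp (-(a + b) ^ 2 / (4 * (ℏ : ℂ)))

lemma bargmann_aux {c C a b d e f g₁ g₂ g₃ : ℂ} (hc : c * c = C)
    (h : a + b + (d + e) = f + (g₁ + g₂ + g₃)) :
    c * Complex.exp a * Complex.exp b * (c * Complex.exp d * Complex.exp e)
      = Complex.exp f * (C * Complex.exp g₁ * Complex.exp g₂ * Complex.exp g₃) := by
  calc c * Complex.exp a * Complex.exp b * (c * Complex.exp d * Complex.exp e)
      = c * c * Complex.exp (a + b + (d + e)) := by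
        rw [Complex.exp_add, Complex.exp_add, Complex.exp_add]; ring
    _ = c * c * Complex.exp (f + (g₁ + g₂ + g₃)) := by rw [h]
    _ = _ := by rw [hc, Complex.exp_add, Complex.exp_add, Complex.exp_add]; ring

theorem bargmann_parity (ℏ : ℝ) (hℏ : 0 < ℏ) (z : ℂ) (x y : ℝ) :
    cs ℏ z x * (starRingEnd ℂ) (cs ℏ z (-y)) =
        Complex.exp (-((Complex.normSq z : ℝ) : ℂ) / (ℏ : ℂ)) *
          Phi ℏ z (-(starRingEnd ℂ) z) x y ∧
    cs ℏ z (-x) * (starRingEnd ℂ) (cs ℏ z y) =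
        Complex.exp (-((Complex.normSq z : ℝ) : ℂ) / (ℏ : ℂ)) *
          Phi ℏ (-z) ((starRingEnd ℂ) z) x y := by
  have hℏ0 : (ℏ : ℂ) ≠ 0 := by exact_mod_cast hℏ.ne'
  have hπℏ : (0 : ℝ) < Real.pi * ℏ := by positivity
  have hc : (((Real.pi * ℏ) ^ (-(1 : ℝ) / 4) : ℝ) : ℂ) *
      (((Real.pi * ℏ) ^ (-(1 : ℝ) / 4) : ℝ) : ℂ)
      = (((Real.pi * ℏ) ^ (-(1 : ℝ) / 2) : ℝ) : ℂ) := by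
    rw [← Complex.ofReal_mul, ← Real.rpow_add hπℏ]
    norm_num
  have hcz : (starRingEnd ℂ) z = (z.re : ℂ) - (z.im : ℂ) * I := by
    apply Complex.ext <;> simp
  have hz : z = (z.re : ℂ) + (z.im : ℂ) * I := (Complex.re_add_im z).symm
  have hn : ((Complex.normSq z : ℝ) : ℂ) = (z.re : ℂ) ^ 2 + (z.im : ℂ) ^ 2 := by
    rw [Complex.normSq_apply]; push_cast; ring
  have hI := Complex.I_sq
  constructor <;>
  · unfold cs Phi
    simp only [map_mul, ← Complex.exp_conj, map_div₀, map_neg, map_pow, Complex.conj_ofReal,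
      Complex.conj_I, map_ofNat]
    refine bargmann_aux hc ?_
    rw [hn, hcz]
    push_cast
    set Q := ((z.re : ℝ) : ℂ) with hQ
    set P := ((z.im : ℝ) : ℂ) with hP
    rw [show z = Q + P * I from by rw [hQ, hP]; exact (Complex.re_add_im z).symm]
    first
    | rw [show (Q + P * I + -(Q - P * I)) ^ 2 = -(4 * P ^ 2) from by
        rw [show (Q + P * I + -(Q - P * I)) = 2 * P * I from by ring, mul_pow, mul_pow, hI]; ring]
    | rw [show (-(Q + P * I) + (Q - P * I)) ^ 2 = -(4 * P ^ 2) from by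
        rw [show (-(Q + P * I) + (Q - P * I)) = -(2 * P * I) from by ring, neg_pow, mul_pow, mul_pow, hI]; ring]
    ring
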